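/- arXiv:2104.12296 — 2 statements merged into one kernel-verified Lean document; each statement's English description precedes it below -/
import Mathlib

section
/- Let ε₁, ε₂, ε₃, η be real numbers with ε₁² + ε₂² + ε₃² + η² = 1 and (ε₁² + η²)(ε₂² + ε₃²) ≠ 0. Define γ = arctan2(½ − ε₂² − ε₃², √((ε₁² + η²)(ε₂² + ε₃²))) and ψ = arctan2(ε₁ε₂ + ε₃η, ε₁ε₃ − ε₂η). Then cos γ · sin ψ = 2(ε₁ε₂ + ε₃η), i.e., the longitude-rate expression (v/(r cos θ)) cos γ sin ψ in the geographic equations of motion coincides with the quaternion-form expression (2v/(r cos θ))(ε₁ε₂ + ε₃η). -/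
/-!
With `s = ε₂² + ε₃²` the unit constraint gives `ε₁² + η² = 1 - s`, so the two arguments of the
flight path angle satisfy `(1 - s) s + (1/2 - s)² = 1/4`: the point lies on the circle of radius
`1/2` and `cos γ = 2√((ε₁² + η²)(ε₂² + ε₃²))`. By the two-square identity the arguments of the
azimuth lie on the circle of radius `√((ε₁² + η²)(ε₂² + ε₃²))`, so `sin ψ` is
`(ε₁ε₂ + ε₃η)` divided by that same root, which cancels in the product. When the root vanishes,
so does `ε₁ε₂ + ε₃η`, and both sides are `0`.
-/

/-- The four-quadrant inverse tangent `arctan2 y x`, realized as the argument of the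
complex number with real part `x` and imaginary part `y`; it satisfies
`sin (arctan2 y x) = y / √(x² + y²)` and `cos (arctan2 y x) = x / √(x² + y²)`
whenever `(x, y) ≠ (0, 0)`. -/
noncomputable def arctan2 (y x : ℝ) : ℝ := Complex.arg ⟨x, y⟩

theorem sin_arctan2 (y x : ℝ) : Real.sin (arctan2 y x) = y / √(x ^ 2 + y ^ 2) := by
  simpa [arctan2, Complex.norm_def, Complex.normSq_mk, sq] using Complex.sin_arg (⟨x, y⟩ : ℂ)

theorem cos_arctan2 {y x : ℝ} (h : x ≠ 0 ∨ y ≠ 0) :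
    Real.cos (arctan2 y x) = x / √(x ^ 2 + y ^ 2) := by
  have hxy : (⟨x, y⟩ : ℂ) ≠ 0 := by
    rintro hzero
    rcases h with hx | hy
    · exact hx (congrArg Complex.re hzero)
    · exact hy (congrArg Complex.im hzero)
  simpa [arctan2, Complex.norm_def, Complex.normSq_mk, sq] using Complex.cos_arg hxy

theorem sqrt_mul_div_sqrt_of_sq_le {a b : ℝ} (h : a ^ 2 ≤ b) : √b * (a / √b) = a := by
  rcases eq_or_ne (√b) 0 with hb | hb
  · have ha : a = 0 := pow_eq_zero_iff two_ne_zero |>.mp <|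
      le_antisymm (h.trans (Real.sqrt_eq_zero'.mp hb)) (sq_nonneg a)
    simp [hb, ha]
  · exact mul_div_cancel₀ a hb

theorem sq_add_sq_azimuth_args (ε₁ ε₂ ε₃ η : ℝ) :
    (ε₁ * ε₃ - ε₂ * η) ^ 2 + (ε₁ * ε₂ + ε₃ * η) ^ 2 = (ε₁ ^ 2 + η ^ 2) * (ε₂ ^ 2 + ε₃ ^ 2) := by
  ring

theorem sq_add_sq_flight_path_args {ε₁ ε₂ ε₃ η : ℝ}
    (hunit : ε₁ ^ 2 + ε₂ ^ 2 + ε₃ ^ 2 + η ^ 2 = 1) :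
    √((ε₁ ^ 2 + η ^ 2) * (ε₂ ^ 2 + ε₃ ^ 2)) ^ 2 + (1 / 2 - ε₂ ^ 2 - ε₃ ^ 2) ^ 2 = (1 / 2) ^ 2 := by
  rw [Real.sq_sqrt (by positivity), show ε₁ ^ 2 + η ^ 2 = 1 - (ε₂ ^ 2 + ε₃ ^ 2) by linarith]
  ring

theorem sin_azimuth (ε₁ ε₂ ε₃ η : ℝ) :
    Real.sin (arctan2 (ε₁ * ε₂ + ε₃ * η) (ε₁ * ε₃ - ε₂ * η)) =
      (ε₁ * ε₂ + ε₃ * η) / √((ε₁ ^ 2 + η ^ 2) * (ε₂ ^ 2 + ε₃ ^ 2)) := by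
  rw [sin_arctan2, sq_add_sq_azimuth_args]

theorem cos_flight_path {ε₁ ε₂ ε₃ η : ℝ} (hunit : ε₁ ^ 2 + ε₂ ^ 2 + ε₃ ^ 2 + η ^ 2 = 1) :
    Real.cos (arctan2 (1 / 2 - ε₂ ^ 2 - ε₃ ^ 2) √((ε₁ ^ 2 + η ^ 2) * (ε₂ ^ 2 + ε₃ ^ 2))) =
      2 * √((ε₁ ^ 2 + η ^ 2) * (ε₂ ^ 2 + ε₃ ^ 2)) := by
  have hcircle := sq_add_sq_flight_path_args hunit
  have hnonzero : √((ε₁ ^ 2 + η ^ 2) * (ε₂ ^ 2 + ε₃ ^ 2)) ≠ 0 ∨ 1 / 2 - ε₂ ^ 2 - ε₃ ^ 2 ≠ 0 := by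
    by_contra! hzero
    rw [hzero.1, hzero.2] at hcircle
    norm_num at hcircle
  rw [cos_arctan2 hnonzero, hcircle, Real.sqrt_sq (by norm_num)]
  ring

theorem longitude_rate_geographic_eq_quaternion_form_general
    (ε₁ ε₂ ε₃ η : ℝ) (hunit : ε₁ ^ 2 + ε₂ ^ 2 + ε₃ ^ 2 + η ^ 2 = 1)
    (γ ψ : ℝ)
    (hγ : γ = arctan2 (1 / 2 - ε₂ ^ 2 - ε₃ ^ 2)
        (Real.sqrt ((ε₁ ^ 2 + η ^ 2) * (ε₂ ^ 2 + ε₃ ^ 2))))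
    (hψ : ψ = arctan2 (ε₁ * ε₂ + ε₃ * η) (ε₁ * ε₃ - ε₂ * η)) :
    Real.cos γ * Real.sin ψ = 2 * (ε₁ * ε₂ + ε₃ * η) ∧
    ∀ v r θ : ℝ,
      v / (r * Real.cos θ) * Real.cos γ * Real.sin ψ =
      2 * v / (r * Real.cos θ) * (ε₁ * ε₂ + ε₃ * η) := by
  have hsq_le : (ε₁ * ε₂ + ε₃ * η) ^ 2 ≤ (ε₁ ^ 2 + η ^ 2) * (ε₂ ^ 2 + ε₃ ^ 2) :=
    sq_add_sq_azimuth_args ε₁ ε₂ ε₃ η ▸ le_add_of_nonneg_left (sq_nonneg _)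
  have hrate : Real.cos γ * Real.sin ψ = 2 * (ε₁ * ε₂ + ε₃ * η) := by
    rw [hγ, hψ, cos_flight_path hunit, sin_azimuth, mul_assoc, sqrt_mul_div_sqrt_of_sq_le hsq_le]
  refine ⟨hrate, fun v r θ => ?_⟩
  rw [mul_assoc, hrate]
  ring

/-- For unit Euler parameters with `(ε₁² + η²)(ε₂² + ε₃²) ≠ 0`, and with
`γ = arctan2(½ − ε₂² − ε₃², √((ε₁² + η²)(ε₂² + ε₃²)))` and
`ψ = arctan2(ε₁ε₂ + ε₃η, ε₁ε₃ − ε₂η)`, one has `cos γ · sin ψ = 2(ε₁ε₂ + ε₃η)`;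
hence the longitude-rate expression `(v/(r cos θ)) cos γ sin ψ` of the geographic
equations of motion coincides with the quaternion-form expression
`(2v/(r cos θ))(ε₁ε₂ + ε₃η)`. -/
theorem longitude_rate_geographic_eq_quaternion_form
    (ε₁ ε₂ ε₃ η : ℝ) (hunit : ε₁ ^ 2 + ε₂ ^ 2 + ε₃ ^ 2 + η ^ 2 = 1)
    (hne : (ε₁ ^ 2 + η ^ 2) * (ε₂ ^ 2 + ε₃ ^ 2) ≠ 0)
    (γ ψ : ℝ)
    (hγ : γ = arctan2 (1 / 2 - ε₂ ^ 2 - ε₃ ^ 2)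
        (Real.sqrt ((ε₁ ^ 2 + η ^ 2) * (ε₂ ^ 2 + ε₃ ^ 2))))
    (hψ : ψ = arctan2 (ε₁ * ε₂ + ε₃ * η) (ε₁ * ε₃ - ε₂ * η)) :
    Real.cos γ * Real.sin ψ = 2 * (ε₁ * ε₂ + ε₃ * η) ∧
    ∀ v r θ : ℝ,
      v / (r * Real.cos θ) * Real.cos γ * Real.sin ψ =
      2 * v / (r * Real.cos θ) * (ε₁ * ε₂ + ε₃ * η) :=
  longitude_rate_geographic_eq_quaternion_form_general ε₁ ε₂ ε₃ η hunit γ ψ hγ hψ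
end

section
/- Let ε₁, ε₂, ε₃, η be real numbers with ε₁² + ε₂² + ε₃² + η² = 1 and (ε₁² + η²)(ε₂² + ε₃²) ≠ 0. Define γ = arctan2(½ − ε₂² − ε₃², √((ε₁² + η²)(ε₂² + ε₃²))) and ψ = arctan2(ε₁ε₂ + ε₃η, ε₁ε₃ − ε₂η). Then cos γ · cos ψ = 2(ε₁ε₃ − ε₂η), i.e., the latitude-rate expression (v/r) cos γ cos ψ in the geographic equations of motion coincides with the quaternion-form expression (2v/r)(ε₁ε₃ − ε₂η). -/
open Real

theorem cos_arctan2_of_sq_add_sq {x y r : ℝ} (hr : 0 < r) (h : x ^ 2 + y ^ 2 = r ^ 2) :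
    cos (arctan2 y x) = x / r := by
  have hnorm : ‖(⟨x, y⟩ : ℂ)‖ = r := by
    rw [Complex.norm_def, Complex.normSq_mk, ← sq, ← sq, h, sqrt_sq hr.le]
  have hz : (⟨x, y⟩ : ℂ) ≠ 0 := norm_pos_iff.mp (hnorm ▸ hr)
  rw [arctan2, Complex.cos_arg hz, hnorm]

/-- For unit Euler parameters with `(ε₁² + η²)(ε₂² + ε₃²) ≠ 0`, and with
`γ = arctan2(½ − ε₂² − ε₃², √((ε₁² + η²)(ε₂² + ε₃²)))` and
`ψ = arctan2(ε₁ε₂ + ε₃η, ε₁ε₃ − ε₂η)`, one has `cos γ · cos ψ = 2(ε₁ε₃ − ε₂η)`;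
hence the latitude-rate expression `(v/r) cos γ cos ψ` of the geographic
equations of motion coincides with the quaternion-form expression
`(2v/r)(ε₁ε₃ − ε₂η)`. -/
theorem latitude_rate_geographic_eq_quaternion_form
    (ε₁ ε₂ ε₃ η : ℝ) (hunit : ε₁ ^ 2 + ε₂ ^ 2 + ε₃ ^ 2 + η ^ 2 = 1)
    (hne : (ε₁ ^ 2 + η ^ 2) * (ε₂ ^ 2 + ε₃ ^ 2) ≠ 0)
    (γ ψ : ℝ)
    (hγ : γ = arctan2 (1 / 2 - ε₂ ^ 2 - ε₃ ^ 2)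
        (Real.sqrt ((ε₁ ^ 2 + η ^ 2) * (ε₂ ^ 2 + ε₃ ^ 2))))
    (hψ : ψ = arctan2 (ε₁ * ε₂ + ε₃ * η) (ε₁ * ε₃ - ε₂ * η)) :
    Real.cos γ * Real.cos ψ = 2 * (ε₁ * ε₃ - ε₂ * η) ∧
    ∀ v r : ℝ,
      v / r * Real.cos γ * Real.cos ψ = 2 * v / r * (ε₁ * ε₃ - ε₂ * η) := by
  have hP : 0 < (ε₁ ^ 2 + η ^ 2) * (ε₂ ^ 2 + ε₃ ^ 2) :=
    (by positivity : (0 : ℝ) ≤ _).lt_of_ne' hne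
  have hcos_γ : cos γ = √((ε₁ ^ 2 + η ^ 2) * (ε₂ ^ 2 + ε₃ ^ 2)) / (1 / 2) := by
    rw [hγ]
    refine cos_arctan2_of_sq_add_sq (by norm_num) ?_
    rw [sq_sqrt hP.le]
    linear_combination (ε₂ ^ 2 + ε₃ ^ 2) * hunit
  have hcos_ψ : cos ψ = (ε₁ * ε₃ - ε₂ * η) / √((ε₁ ^ 2 + η ^ 2) * (ε₂ ^ 2 + ε₃ ^ 2)) := by
    rw [hψ]
    refine cos_arctan2_of_sq_add_sq (sqrt_pos.2 hP) ?_
    rw [sq_sqrt hP.le, sq_add_sq_mul_sq_add_sq]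
    ring
  have hlatitude : cos γ * cos ψ = 2 * (ε₁ * ε₃ - ε₂ * η) := by
    rw [hcos_γ, hcos_ψ]
    field_simp
  exact ⟨hlatitude, fun v r => by rw [mul_assoc, hlatitude]; ring⟩
end
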